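/- Characterization of dual-convexity subharmonics as subaffine functions: Let X ⊂ ℝⁿ be open and u ∈ USC(X). Then u is \widetilde{𝒫}-subharmonic on X, where \widetilde{𝒫} = {A ∈ S(n) : λ_max(A) ≥ 0}, if and only if u is subaffine on X: for every bounded open Ω with closure contained in X and every affine function a(x) = ⟨b, x⟩ + c on ℝⁿ, u ≤ a on ∂Ω implies u ≤ a on Ω. -/

import Mathlib

open Set Filter Topology Bornology
open scoped Pointwise

noncomputable section

/-- Euclidean space `ℝⁿ`. -/
abbrev En (n : ℕ) : Type := EuclideanSpace ℝ (Fin n)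

/-- The space `S(n)` of real symmetric `n×n` matrices. -/
abbrev SymMat (n : ℕ) : Type := selfAdjoint (Matrix (Fin n) (Fin n) ℝ)

/-- The (constant coefficient) 2-jet space `J² = ℝ × ℝⁿ × S(n)`. -/
abbrev Jet (n : ℕ) : Type := ℝ × En n × SymMat n

/-- `P ≥ 0`, i.e. `P` is positive semidefinite. -/
def PSD {n : ℕ} (P : SymMat n) : Prop := (P : Matrix (Fin n) (Fin n) ℝ).PosSemidef

/-- The Hessian matrix `D²φ(x)` of `φ` at `x`. -/
def hess {n : ℕ} (φ : En n → ℝ) (x : En n) : Matrix (Fin n) (Fin n) ℝ :=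
  Matrix.of fun i j =>
    iteratedFDeriv ℝ 2 φ x ![EuclideanSpace.single i (1 : ℝ), EuclideanSpace.single j (1 : ℝ)]

/-- `A ∈ D^{2,+}_x u`: `A` is the Hessian at `x` of an upper contact function for `u` at `x`. -/
def IsUpperContactHessian {n : ℕ} (X : Set (En n)) (u : En n → EReal) (x : En n)
    (A : SymMat n) : Prop :=
  ∃ φ : En n → ℝ, ∃ V : Set (En n), IsOpen V ∧ x ∈ V ∧ V ⊆ X ∧ ContDiffOn ℝ 2 φ V ∧
    (∀ y ∈ V, u y ≤ (φ y : EReal)) ∧ u x = (φ x : EReal) ∧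
    (A : Matrix (Fin n) (Fin n) ℝ) = hess φ x

/-! ### Auxiliary lemmas -/

/-- An upper semicontinuous `EReal`-valued function on a nonempty compact set attains
its maximum. -/
lemma usc_compact_max' {E : Type*} [TopologicalSpace E] {K : Set E} (hK : IsCompact K)
    (hne : K.Nonempty) {g : E → EReal} (hg : UpperSemicontinuousOn g K) :
    ∃ z ∈ K, ∀ y ∈ K, g y ≤ g z := by
  by_contra h
  push_neg at h
  have h' : ∀ z (hz : z ∈ K), ∃ p : Set E × E, p.2 ∈ K ∧ IsOpen p.1 ∧ z ∈ p.1 ∧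
      ∀ w ∈ p.1 ∩ K, g w < g p.2 := by
    intro z hz
    obtain ⟨y, hy, hlt⟩ := h z hz
    have := hg z hz (g y) hlt
    rw [eventually_nhdsWithin_iff] at this
    obtain ⟨U, hUsub, hUopen, hzU⟩ := mem_nhds_iff.mp this
    exact ⟨(U, y), hy, hUopen, hzU, fun w ⟨hwU, hwK⟩ => hUsub hwU hwK⟩
  choose p hpK hpopen hpmem hplt using h'
  obtain ⟨t, ht⟩ := hK.elim_nhds_subcover' (fun z hz => (p z hz).1)
    (fun z hz => (hpopen z hz).mem_nhds (hpmem z hz))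
  obtain ⟨x0, hx0⟩ := hne
  obtain ⟨z0, hz0t, _⟩ := mem_iUnion₂.mp (ht hx0)
  obtain ⟨z, hzt, hzmax⟩ := t.exists_max_image (fun z : K => g (p z z.2).2) ⟨z0, hz0t⟩
  have hlt : ∀ w ∈ K, g w < g (p z z.2).2 := by
    intro w hw
    obtain ⟨z', hz't, hwU⟩ := mem_iUnion₂.mp (ht hw)
    exact lt_of_lt_of_le (hplt z' z'.2 w ⟨hwU, hw⟩) (hzmax z' hz't)
  exact absurd (hlt _ (hpK z z.2)) (lt_irrefl _)

lemma ereal_step' {t : EReal} {p q : ℝ} (h : t + (p : EReal) ≤ (q : EReal)) :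
    t ≤ ((q - p : ℝ) : EReal) := by
  induction t using EReal.rec with
  | bot => exact bot_le
  | coe a =>
    rw [← EReal.coe_add] at h
    exact_mod_cast by linarith [EReal.coe_le_coe_iff.mp h]
  | top => simp [EReal.top_add_coe] at h

lemma bilin_expand' {n : ℕ} (B : En n →L[ℝ] En n →L[ℝ] ℝ) (v : En n) :
    B v v = ∑ i, ∑ j, v i * v j *
      B (EuclideanSpace.single j 1) (EuclideanSpace.single i 1) := by
  have hv : ∑ i, v i • EuclideanSpace.single i (1:ℝ) = v := by
    have := (EuclideanSpace.basisFun (Fin n) ℝ).sum_repr v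
    simpa [EuclideanSpace.basisFun_apply, EuclideanSpace.basisFun_repr] using this
  conv_lhs => rw [← hv]
  rw [map_sum]
  simp only [ContinuousLinearMap.coe_sum', Finset.sum_apply, map_smul,
    ContinuousLinearMap.coe_smul', Pi.smul_apply, map_sum, smul_eq_mul]
  refine Finset.sum_congr rfl fun i _ => ?_
  rw [Finset.mul_sum]
  refine Finset.sum_congr rfl fun j _ => ?_
  ring

lemma inner_toEuclideanLin_eq' {n : ℕ} (B : En n →L[ℝ] En n →L[ℝ] ℝ)
    (M : Matrix (Fin n) (Fin n) ℝ)
    (hM : ∀ i j, M i j = B (EuclideanSpace.single i 1) (EuclideanSpace.single j 1))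
    (v : En n) :
    (inner ℝ (Matrix.toEuclideanLin M v) v : ℝ) = B v v := by
  rw [bilin_expand']
  simp only [Matrix.toEuclideanLin_apply, PiLp.inner_apply, RCLike.inner_apply, conj_trivial,
    Matrix.mulVec, dotProduct, PiLp.toLp_apply]
  rw [Finset.sum_comm]
  refine Finset.sum_congr rfl fun i _ => ?_
  rw [Finset.mul_sum]
  refine Finset.sum_congr rfl fun j _ => ?_
  rw [hM]
  ring

lemma quad_snd_deriv' {n : ℕ} (b : En n) (c' ε : ℝ) (z v w : En n) :
    fderiv ℝ (fderiv ℝ (fun y : En n => (inner ℝ b y : ℝ) + c' - ε * (inner ℝ y y : ℝ))) z v w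
      = -(2*ε) * (inner ℝ w v : ℝ) := by
  set φ : En n → ℝ := fun y => (inner ℝ b y : ℝ) + c' - ε * (inner ℝ y y : ℝ) with hφdef
  have hφc : ContDiff ℝ 2 φ :=
    ((contDiff_const.inner ℝ contDiff_id).add contDiff_const).sub
      (contDiff_const.mul (contDiff_id.inner ℝ contDiff_id))
  have hf'apply : ∀ y w : En n, fderiv ℝ φ y w = (inner ℝ b w : ℝ) - 2*ε*(inner ℝ y w : ℝ) := by
    intro y w
    have h1 : HasFDerivAt (fun t : En n => (inner ℝ b t : ℝ))
        ((fderivInnerCLM ℝ (b, y)).comp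
          ((0 : En n →L[ℝ] En n).prod (ContinuousLinearMap.id ℝ (En n)))) y :=
      (hasFDerivAt_const b y).inner ℝ (hasFDerivAt_id y)
    have h2 : HasFDerivAt (fun t : En n => (inner ℝ t t : ℝ))
        ((fderivInnerCLM ℝ (y, y)).comp
          ((ContinuousLinearMap.id ℝ (En n)).prod (ContinuousLinearMap.id ℝ (En n)))) y :=
      (hasFDerivAt_id y).inner ℝ (hasFDerivAt_id y)
    have h3 := (h1.add_const c').sub (h2.const_mul ε)
    show fderiv ℝ ((fun x => inner ℝ b x + c') - fun y => ε * inner ℝ y y) y w = _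
    rw [h3.fderiv]
    simp only [ContinuousLinearMap.coe_sub', Pi.sub_apply, ContinuousLinearMap.coe_smul',
      Pi.smul_apply, ContinuousLinearMap.coe_comp', Function.comp_apply,
      ContinuousLinearMap.prod_apply, ContinuousLinearMap.coe_id', id_eq,
      ContinuousLinearMap.zero_apply, fderivInnerCLM_apply, smul_eq_mul]
    rw [real_inner_comm w y]
    simp [inner_zero_left]
    ring
  have hdiff1 : DifferentiableAt ℝ (fderiv ℝ φ) z :=
    ((hφc.fderiv_right (m := 1) (by norm_num)).differentiable one_ne_zero).differentiableAt
  have happ : fderiv ℝ (fun y => fderiv ℝ φ y w) z = (fderiv ℝ (fderiv ℝ φ) z).flip w := by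
    have := fderiv_clm_apply (c := fun y => fderiv ℝ φ y) (u := fun _ => w)
      hdiff1 (differentiableAt_const w)
    simpa using this
  have hfun : (fun y => fderiv ℝ φ y w)
      = fun y : En n => (inner ℝ b w : ℝ) + ((-(2*ε)) • innerSL ℝ w) y := by
    funext y
    rw [hf'apply y w]
    simp only [ContinuousLinearMap.coe_smul', Pi.smul_apply, innerSL_apply_apply, smul_eq_mul]
    rw [real_inner_comm w y]
    ring
  have hder2 : HasFDerivAt (fun y : En n => (inner ℝ b w : ℝ) + ((-(2*ε)) • innerSL ℝ w) y)
      ((-(2*ε)) • innerSL ℝ w) z :=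
    (((-(2*ε)) • innerSL ℝ w).hasFDerivAt).const_add _
  have hfd : fderiv ℝ (fun y => fderiv ℝ φ y w) z = (-(2*ε)) • innerSL ℝ w := by
    rw [hfun]; exact hder2.fderiv
  rw [happ] at hfd
  have := congrArg (fun (L : En n →L[ℝ] ℝ) => L v) hfd
  simpa using this

/-- A negative-definite continuous bilinear form on `Eⁿ` admits a uniform negativity constant. -/
lemma neg_def_const' {n : ℕ} (B : En n →L[ℝ] En n →L[ℝ] ℝ)
    (hneg : ∀ v : En n, ‖v‖ = 1 → B v v < 0) :
    ∃ C > (0:ℝ), ∀ h : En n, B h h ≤ -C * ‖h‖^2 := by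
  have hscale : ∀ (a : ℝ) (w : En n), B (a • w) (a • w) = a^2 * B w w := by
    intro a w; simp [map_smul, smul_eq_mul]; ring
  by_cases hsp : ∃ v : En n, ‖v‖ = 1
  · have hne : (Metric.sphere (0 : En n) 1).Nonempty := by
      obtain ⟨v, hv⟩ := hsp; exact ⟨v, by simpa [mem_sphere_zero_iff_norm] using hv⟩
    have hQc : Continuous fun v : En n => B v v :=
      (B.isBoundedBilinearMap.continuous).comp (continuous_id.prodMk continuous_id)
    obtain ⟨v₀, hv₀, hmax⟩ := (isCompact_sphere (0 : En n) 1).exists_isMaxOn hne hQc.continuousOn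
    have hv₀n : ‖v₀‖ = 1 := mem_sphere_zero_iff_norm.mp hv₀
    refine ⟨-(B v₀ v₀), by simpa using hneg v₀ hv₀n, fun h => ?_⟩
    rcases eq_or_ne h 0 with rfl | hh
    · simp
    · have hw : ‖(‖h‖⁻¹ : ℝ) • h‖ = 1 := norm_smul_inv_norm hh
      have hmem : (‖h‖⁻¹ : ℝ) • h ∈ Metric.sphere (0 : En n) 1 := by
        simpa [mem_sphere_zero_iff_norm] using hw
      have h1 : B ((‖h‖⁻¹ : ℝ) • h) ((‖h‖⁻¹ : ℝ) • h) ≤ B v₀ v₀ := hmax hmem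
      have h2 : h = (‖h‖ : ℝ) • ((‖h‖⁻¹ : ℝ) • h) := by
        rw [smul_smul, mul_inv_cancel₀ (norm_ne_zero_iff.mpr hh), one_smul]
      calc B h h = ‖h‖^2 * B ((‖h‖⁻¹ : ℝ) • h) ((‖h‖⁻¹ : ℝ) • h) := by
              conv_lhs => rw [h2]; rw [hscale]
           _ ≤ ‖h‖^2 * B v₀ v₀ := mul_le_mul_of_nonneg_left h1 (sq_nonneg _)
           _ = -(-(B v₀ v₀)) * ‖h‖^2 := by ring
  · refine ⟨1, one_pos, fun h => ?_⟩
    have : h = 0 := by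
      by_contra hh
      exact hsp ⟨(‖h‖⁻¹ : ℝ) • h, norm_smul_inv_norm hh⟩
    simp [this]

set_option maxHeartbeats 2000000 in
lemma reverse_core' {n : ℕ} (X : Set (En n)) (u : En n → EReal)
    (hsub : ∀ Ω : Set (En n), IsOpen Ω → IsBounded Ω → closure Ω ⊆ X →
      ∀ b : En n, ∀ c : ℝ,
        (∀ x ∈ frontier Ω, u x ≤ (((inner ℝ b x : ℝ) + c : ℝ) : EReal)) →
        ∀ x ∈ Ω, u x ≤ (((inner ℝ b x : ℝ) + c : ℝ) : EReal))
    (x : En n) (φ : En n → ℝ) (V : Set (En n)) (hVo : IsOpen V) (hxV : x ∈ V) (hVX : V ⊆ X)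
    (hφ : ContDiffOn ℝ 2 φ V) (hle : ∀ y ∈ V, u y ≤ (φ y : EReal)) (heq : u x = (φ x : EReal))
    (C : ℝ) (hC : 0 < C)
    (hQ : ∀ h : En n, fderiv ℝ (fderiv ℝ φ) x h h ≤ -C * ‖h‖^2) : False := by
  set f' : En n → (En n →L[ℝ] ℝ) := fun y => fderiv ℝ φ y with hf'def
  set B := fderiv ℝ (fderiv ℝ φ) x with hBdef
  have hφAt : ∀ y ∈ V, ContDiffAt ℝ 2 φ y := fun y hy => hφ.contDiffAt (hVo.mem_nhds hy)
  have hder : ∀ y ∈ V, HasFDerivAt φ (f' y) y := fun y hy =>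
    ((hφAt y hy).differentiableAt (by norm_num)).hasFDerivAt
  have hBx : HasFDerivAt f' B x :=
    (((hφAt x hxV).fderiv_right (m := 1) (by norm_num)).differentiableAt one_ne_zero).hasFDerivAt
  have hsymm : ∀ v w, B v w = B w v := fun v w =>
    second_derivative_symmetric_of_eventually
      (Filter.eventually_of_mem (hVo.mem_nhds hxV) (fun y hy => hder y hy)) hBx v w
  obtain ⟨ε₁, hε₁, hlo⟩ :=
    Metric.eventually_nhds_iff.mp (hBx.isLittleO.def (by positivity : (0:ℝ) < C/4))
  obtain ⟨ε₂, hε₂, hball⟩ := Metric.isOpen_iff.mp hVo x hxV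
  set r : ℝ := min ε₁ ε₂ / 2 with hrdef
  have hr : 0 < r := by positivity
  have hrlt : r < min ε₁ ε₂ := by
    have : 0 < min ε₁ ε₂ := lt_min hε₁ hε₂
    simp only [hrdef]; linarith
  set s : Set (En n) := Metric.closedBall x r with hsdef
  have hsV : s ⊆ V := fun z hz => hball (by
    have : dist z x ≤ r := Metric.mem_closedBall.mp hz
    exact Metric.mem_ball.mpr (lt_of_le_of_lt this (hrlt.trans_le (min_le_right _ _))))
  have hslo : ∀ z ∈ s, ‖f' z - f' x - B (z - x)‖ ≤ C/4 * ‖z - x‖ := by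
    intro z hz
    exact hlo (lt_of_le_of_lt (Metric.mem_closedBall.mp hz)
      (hrlt.trans_le (min_le_left _ _)))
  set g : En n → ℝ := fun y => φ y - (f' x y - f' x x) - (1/2) * B (y - x) (y - x) with hgdef
  have hBB := (B.isBoundedBilinearMap : IsBoundedBilinearMap ℝ fun p : En n × En n => B p.1 p.2)
  have hgder : ∀ z ∈ s, HasFDerivWithinAt g (f' z - f' x - B (z - x)) s z := by
    intro z hz
    have h1 : HasFDerivAt (fun y : En n => (y - x, y - x))
        ((ContinuousLinearMap.id ℝ (En n)).prod (ContinuousLinearMap.id ℝ (En n))) z :=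
      ((hasFDerivAt_id z).sub_const x).prodMk ((hasFDerivAt_id z).sub_const x)
    have h2 : HasFDerivAt (fun y : En n => B (y - x) (y - x))
        ((hBB.deriv (z - x, z - x)).comp
          ((ContinuousLinearMap.id ℝ (En n)).prod (ContinuousLinearMap.id ℝ (En n)))) z :=
      by have := (hBB.hasFDerivAt (z - x, z - x)).comp z h1; exact this
    have h3 : HasFDerivAt g
        (f' z - f' x - (1/2 : ℝ) • ((hBB.deriv (z - x, z - x)).comp
          ((ContinuousLinearMap.id ℝ (En n)).prod (ContinuousLinearMap.id ℝ (En n))))) z :=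
      ((hder z (hsV hz)).sub (((f' x).hasFDerivAt).sub_const (f' x x))).sub (h2.const_mul (1/2))
    have hEq : (f' z - f' x - (1/2 : ℝ) • ((hBB.deriv (z - x, z - x)).comp
          ((ContinuousLinearMap.id ℝ (En n)).prod (ContinuousLinearMap.id ℝ (En n)))))
        = f' z - f' x - B (z - x) := by
      ext w
      simp only [ContinuousLinearMap.coe_sub', Pi.sub_apply, ContinuousLinearMap.coe_smul',
        Pi.smul_apply, ContinuousLinearMap.coe_comp', Function.comp_apply,
        ContinuousLinearMap.prod_apply, ContinuousLinearMap.coe_id', id_eq,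
        IsBoundedBilinearMap.deriv_apply, smul_eq_mul]
      rw [hsymm w (z - x)]
      ring
    rw [hEq] at h3
    exact h3.hasFDerivWithinAt
  have hbound : ∀ z ∈ s, ‖f' z - f' x - B (z - x)‖ ≤ C/4 * r := by
    intro z hz
    refine (hslo z hz).trans ?_
    have : ‖z - x‖ ≤ r := by rw [← dist_eq_norm]; exact Metric.mem_closedBall.mp hz
    nlinarith [norm_nonneg (z - x)]
  have hxs : x ∈ s := Metric.mem_closedBall_self hr.le
  have hkey : ∀ y ∈ s, ‖g y - g x‖ ≤ C/4 * r * ‖y - x‖ := fun y hy =>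
    Convex.norm_image_sub_le_of_norm_hasFDerivWithin_le hgder hbound (convex_closedBall x r) hxs hy
  have hgx : g x = φ x := by simp [hgdef]
  set b₀ : En n := (InnerProductSpace.toDual ℝ (En n)).symm (f' x) with hb₀
  set c₀ : ℝ := φ x - f' x x - C/4 * r^2 with hc₀
  have hbeq : ∀ y : En n, (inner ℝ b₀ y : ℝ) = f' x y := fun y =>
    InnerProductSpace.toDual_symm_apply
  have hφle : ∀ y ∈ Metric.sphere x r, φ y ≤ (inner ℝ b₀ y : ℝ) + c₀ := by
    intro y hy
    have hys : y ∈ s := Metric.sphere_subset_closedBall hy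
    have h1 : g y - g x ≤ C/4 * r * ‖y - x‖ := (Real.le_norm_self _).trans (hkey y hys)
    have hnorm : ‖y - x‖ = r := by rw [← dist_eq_norm]; exact Metric.mem_sphere.mp hy
    have h2 : B (y - x) (y - x) ≤ -C * r^2 := by
      have := hQ (y - x); rwa [hnorm] at this
    have hgy : g y = φ y - ((f' x) y - (f' x) x) - 1/2 * B (y - x) (y - x) := rfl
    rw [hgx, hgy, hnorm] at h1
    rw [hbeq y, hc₀]
    have hrr : C/4 * r * r = C/4 * r^2 := by ring
    linarith [h1, h2]
  have hfr : ∀ y ∈ frontier (Metric.ball x r), u y ≤ (((inner ℝ b₀ y : ℝ) + c₀ : ℝ) : EReal) := by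
    intro y hy
    have hysph : y ∈ Metric.sphere x r := Metric.frontier_ball_subset_sphere hy
    have hyV : y ∈ V := hsV (Metric.sphere_subset_closedBall hysph)
    exact (hle y hyV).trans (by exact_mod_cast EReal.coe_le_coe_iff.mpr (hφle y hysph))
  have hcl : closure (Metric.ball x r) ⊆ X :=
    (Metric.closure_ball_subset_closedBall).trans (hsV.trans hVX)
  have hfin := hsub (Metric.ball x r) Metric.isOpen_ball Metric.isBounded_ball hcl b₀ c₀ hfr
    x (Metric.mem_ball_self hr)
  rw [heq] at hfin
  have hfin' : φ x ≤ (inner ℝ b₀ x : ℝ) + c₀ := EReal.coe_le_coe_iff.mp hfin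
  rw [hbeq x, hc₀] at hfin'
  nlinarith [hr, hC, sq_nonneg r, mul_pos (mul_pos hC hr) hr]

/-- Characterization of the dual-convexity subharmonics as the subaffine functions. -/
theorem statement_14 {n : ℕ} (X : Set (En n)) (hX : IsOpen X)
    (u : En n → EReal) (husc : UpperSemicontinuousOn u X) (hut : ∀ x ∈ X, u x < ⊤) :
    (∀ x ∈ X, ∀ A : SymMat n, IsUpperContactHessian X u x A →
      ∃ v : En n, ‖v‖ = 1 ∧
        (0 : ℝ) ≤ inner ℝ ((Matrix.toEuclideanLin (A : Matrix (Fin n) (Fin n) ℝ)) v) v) ↔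
    (∀ Ω : Set (En n), IsOpen Ω → IsBounded Ω → closure Ω ⊆ X →
      ∀ b : En n, ∀ c : ℝ,
        (∀ x ∈ frontier Ω, u x ≤ (((inner ℝ b x : ℝ) + c : ℝ) : EReal)) →
        ∀ x ∈ Ω, u x ≤ (((inner ℝ b x : ℝ) + c : ℝ) : EReal)) := by
  constructor
  · -- subharmonic → subaffine
    intro hsubh Ω hΩo hΩb hΩX b c hbd x hx
    by_contra hcon
    rw [not_le] at hcon
    set a : En n → ℝ := fun y => inner ℝ b y + c with ha
    set K := closure Ω with hKdef
    have hΩX' : Ω ⊆ X := subset_closure.trans hΩX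
    have hKc : IsCompact K := hΩb.isCompact_closure
    have hxK : x ∈ K := subset_closure hx
    have hxtop : u x ≠ ⊤ := (hut x (hΩX' hx)).ne
    have hxbot : u x ≠ ⊥ := by
      intro h; rw [h] at hcon; exact absurd hcon (not_lt.mpr bot_le)
    set m₀ := (u x).toReal with hm₀
    have hux : u x = (m₀ : EReal) := (EReal.coe_toReal hxtop hxbot).symm
    have hδ0 : a x < m₀ := by
      rw [hux] at hcon; exact_mod_cast hcon
    set δ := m₀ - a x with hδdef
    have hδpos : 0 < δ := sub_pos.mpr hδ0
    obtain ⟨R, hR⟩ := hΩb.subset_closedBall 0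
    have hKR : K ⊆ Metric.closedBall 0 R := closure_minimal hR Metric.isClosed_closedBall
    have hRnn : 0 ≤ R := by
      have := hKR hxK
      rw [Metric.mem_closedBall, dist_zero_right] at this
      exact (norm_nonneg x).trans this
    set ε := δ / (R^2 + 1) with hε
    have hεpos : 0 < ε := div_pos hδpos (by positivity)
    have hεR : ε * R^2 < δ := by
      rw [hε, div_mul_eq_mul_div, div_lt_iff₀ (by positivity : (0:ℝ) < R^2 + 1)]
      nlinarith
    set ψ : En n → ℝ := fun y => ε * inner ℝ y y - a y with hψ
    have hψc : Continuous ψ := by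
      apply Continuous.sub
      · exact continuous_const.mul (continuous_id.inner continuous_id)
      · exact (continuous_const.inner continuous_id).add continuous_const
    set g : En n → EReal := fun y => u y + ((ψ y : ℝ) : EReal) with hg
    have hgusc : UpperSemicontinuousOn g K := by
      apply UpperSemicontinuousOn.add' (husc.mono hΩX)
        ((continuous_coe_real_ereal.comp hψc).upperSemicontinuous.upperSemicontinuousOn K)
      intro y _
      exact EReal.continuousAt_add (Or.inr (EReal.coe_ne_bot _)) (Or.inr (EReal.coe_ne_top _))
    obtain ⟨z, hzK, hzmax⟩ := usc_compact_max' hKc ⟨x, hxK⟩ hgusc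
    have hgx : ((δ + ε * inner ℝ x x : ℝ) : EReal) = g x := by
      rw [hg]
      show _ = u x + _
      rw [hux, ← EReal.coe_add]
      norm_cast
      rw [hψ, hδdef]
      ring
    have hδgz : ((δ : ℝ) : EReal) ≤ g z := by
      refine le_trans ?_ (hzmax x hxK)
      rw [← hgx]
      exact_mod_cast EReal.coe_le_coe_iff.mpr (by nlinarith [real_inner_self_nonneg (x := x)])
    have hfr : ∀ y ∈ frontier Ω, g y ≤ ((ε * R^2 : ℝ) : EReal) := by
      intro y hy
      have hyK : y ∈ K := frontier_subset_closure hy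
      have h1 : u y ≤ ((a y : ℝ) : EReal) := hbd y hy
      have h2 : g y ≤ ((a y : ℝ) : EReal) + ((ψ y : ℝ) : EReal) := add_le_add_left h1 _
      rw [← EReal.coe_add] at h2
      refine h2.trans ?_
      apply EReal.coe_le_coe_iff.mpr
      have hyR : ‖y‖ ≤ R := by
        have := hKR hyK
        rwa [Metric.mem_closedBall, dist_zero_right] at this
      have hin : (inner ℝ y y : ℝ) = ‖y‖^2 := real_inner_self_eq_norm_sq y
      rw [hψ]
      simp only
      rw [hin]
      have hsq : ‖y‖^2 ≤ R^2 := pow_le_pow_left₀ (norm_nonneg y) hyR 2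
      nlinarith [hεpos, hsq]
    have hzΩ : z ∈ Ω := by
      have hznf : z ∉ frontier Ω := by
        intro hzf
        have h2 : ((ε * R^2 : ℝ) : EReal) < ((δ : ℝ) : EReal) := by exact_mod_cast hεR
        exact absurd (hδgz.trans (hfr z hzf)) (not_le.mpr h2)
      have hzint : z ∈ interior Ω := by
        by_contra hzi
        exact hznf ⟨hzK, hzi⟩
      rwa [hΩo.interior_eq] at hzint
    have hztop : u z ≠ ⊤ := (hut z (hΩX' hzΩ)).ne
    have hzbot : u z ≠ ⊥ := by
      intro h
      have : g z = ⊥ := by rw [hg]; show u z + _ = ⊥; rw [h, EReal.bot_add]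
      rw [this] at hδgz
      exact absurd hδgz (not_le.mpr (bot_lt_iff_ne_bot.mpr (EReal.coe_ne_bot δ)))
    set m := (u z).toReal with hm
    have huz : u z = (m : EReal) := (EReal.coe_toReal hztop hzbot).symm
    set c' : ℝ := c + m + ψ z with hc'
    set φ : En n → ℝ := fun y => (inner ℝ b y : ℝ) + c' - ε * (inner ℝ y y : ℝ) with hφdef
    have hφψ : ∀ y : En n, φ y = m + ψ z - ψ y := by
      intro y
      rw [hφdef, hψ, hc', ha]
      simp only
      ring
    have hle : ∀ y ∈ Ω, u y ≤ (φ y : EReal) := by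
      intro y hy
      have h1 : g y ≤ g z := hzmax y (subset_closure hy)
      rw [hg] at h1
      simp only at h1
      rw [huz, ← EReal.coe_add] at h1
      have := ereal_step' h1
      rwa [hφψ y]
    have heqz : u z = (φ z : EReal) := by
      rw [huz]
      norm_cast
      rw [hφψ z]
      ring
    have hφc : ContDiff ℝ 2 φ :=
      ((contDiff_const.inner ℝ contDiff_id).add contDiff_const).sub
        (contDiff_const.mul (contDiff_id.inner ℝ contDiff_id))
    set Amat : Matrix (Fin n) (Fin n) ℝ := (-(2*ε)) • (1 : Matrix (Fin n) (Fin n) ℝ) with hAm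
    have hAsa : Amat ∈ selfAdjoint (Matrix (Fin n) (Fin n) ℝ) := by
      rw [selfAdjoint.mem_iff, hAm]
      simp [star_smul]
    have hAhess : Amat = hess φ z := by
      ext i j
      rw [hess, Matrix.of_apply, iteratedFDeriv_two_apply]
      simp only [Matrix.cons_val_zero, Matrix.cons_val_one, Matrix.head_cons]
      rw [hφdef]
      rw [quad_snd_deriv' b c' ε z (EuclideanSpace.single i 1) (EuclideanSpace.single j 1)]
      rw [EuclideanSpace.inner_single_left]
      rw [hAm]
      simp only [Matrix.smul_apply, Matrix.one_apply, smul_eq_mul, map_one, one_mul,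
        EuclideanSpace.single_apply]
      by_cases h : i = j
      · simp [h]
      · have h' : ¬ (j = i) := fun hh => h hh.symm
        simp [h, h']
    have hcontact : IsUpperContactHessian X u z ⟨Amat, hAsa⟩ :=
      ⟨φ, Ω, hΩo, hzΩ, hΩX', hφc.contDiffOn, hle, heqz, hAhess⟩
    obtain ⟨v, hv1, hv2⟩ := hsubh z (hΩX' hzΩ) ⟨Amat, hAsa⟩ hcontact
    have hlin : Matrix.toEuclideanLin Amat v = (-(2*ε)) • v := by
      rw [hAm]
      rw [map_smul]
      simp only [LinearMap.smul_apply]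
      congr 1
      show Matrix.toEuclideanLin 1 v = v
      rw [Matrix.toEuclideanLin_apply]
      simp [Matrix.one_mulVec]
    rw [hlin] at hv2
    rw [real_inner_smul_left, real_inner_self_eq_norm_sq, hv1] at hv2
    norm_num at hv2
    linarith
  · -- subaffine → subharmonic
    intro hsub x hx A hA
    by_contra hnex
    push_neg at hnex
    obtain ⟨φ, V, hVo, hxV, hVX, hφ, hle, heq, hAm⟩ := hA
    set B := fderiv ℝ (fderiv ℝ φ) x with hBdef
    have hM : ∀ i j, (A : Matrix (Fin n) (Fin n) ℝ) i j
        = B (EuclideanSpace.single i 1) (EuclideanSpace.single j 1) := by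
      intro i j
      rw [hAm, hess, Matrix.of_apply, iteratedFDeriv_two_apply]
      simp [hBdef]
    have hinner : ∀ v : En n,
        (inner ℝ (Matrix.toEuclideanLin (A : Matrix (Fin n) (Fin n) ℝ) v) v : ℝ) = B v v :=
      inner_toEuclideanLin_eq' B _ hM
    have hneg : ∀ v : En n, ‖v‖ = 1 → B v v < 0 := by
      intro v hv
      rw [← hinner v]
      exact hnex v hv
    obtain ⟨C, hC, hQ⟩ := neg_def_const' B hneg
    exact reverse_core' X u hsub x φ V hVo hxV hVX hφ hle heq C hC hQ

end
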